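/- arXiv:math/0110002 — 4 statements merged into one kernel-verified Lean document; each statement's English description precedes it below -/
import Mathlib

section
/- Let n ≥ 1 and 0 ≤ l with 2l ≤ n. The number of tuples κ ∈ {0,1}^n such that ∑_{i=1}^{l} κ_{2i-1}·κ_{2i} is even equals 2^{n-1} + 2^{n-l-1}. -/
private def gg (b : Fin 2 → Fin 2) : ℕ := (b 0).val * (b 1).val

private lemma card_split (l : ℕ) (p : (Fin l → Fin 2 → Fin 2) → Prop) [DecidablePred p] :
    Fintype.card {f // p f} + Fintype.card {f // ¬ p f} = 4 ^ l := by
  rw [Fintype.card_subtype, Fintype.card_subtype,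
    Finset.card_filter_add_card_filter_not]
  simp [Fintype.card_fun]

private lemma cardA (l : ℕ) :
    2 * Fintype.card {f : Fin l → (Fin 2 → Fin 2) // Even (∑ i, gg (f i))}
      = 4 ^ l + 2 ^ l := by
  induction l with
  | zero => simp [Fintype.card_eq_one_iff]
  | succ l ih =>
    obtain ⟨E, hE⟩ : ∃ E, Fintype.card {f : Fin l → (Fin 2 → Fin 2) // Even (∑ i, gg (f i))} = E := ⟨_, rfl⟩
    obtain ⟨O, hO⟩ : ∃ O, Fintype.card {f : Fin l → (Fin 2 → Fin 2) // ¬ Even (∑ i, gg (f i))} = O := ⟨_, rfl⟩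
    rw [hE] at ih
    have hEO : E + O = 4 ^ l := by rw [← hE, ← hO]; exact card_split l _
    have key : Fintype.card {f : Fin (l+1) → (Fin 2 → Fin 2) // Even (∑ i, gg (f i))}
        = 3 * E + O := by
      have e1 : {f : Fin (l+1) → (Fin 2 → Fin 2) // Even (∑ i, gg (f i))} ≃
          {p : (Fin 2 → Fin 2) × (Fin l → Fin 2 → Fin 2) //
            Even (gg p.1 + ∑ i, gg (p.2 i))} := by
        refine (Fin.consEquiv (fun _ : Fin (l+1) => Fin 2 → Fin 2)).symm.subtypeEquiv (fun f => ?_)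
        rw [Fin.sum_univ_succ]
        rfl
      have e2 := Equiv.subtypeProdEquivSigmaSubtype
        (fun (b : Fin 2 → Fin 2) (f : Fin l → Fin 2 → Fin 2) =>
          Even (gg b + ∑ i, gg (f i)))
      rw [Fintype.card_congr (e1.trans e2), Fintype.card_sigma]
      have step : ∀ b : Fin 2 → Fin 2,
          Fintype.card {f : Fin l → Fin 2 → Fin 2 // Even (gg b + ∑ i, gg (f i))}
            = if Even (gg b) then E else O := by
        intro b
        by_cases hb : Even (gg b)
        · simp only [hb, if_true, ← hE]
          exact Fintype.card_congr (Equiv.subtypeEquivRight (fun f => by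
            rw [Nat.even_add]; tauto))
        · simp only [hb, if_false, ← hO]
          exact Fintype.card_congr (Equiv.subtypeEquivRight (fun f => by
            rw [Nat.even_add]; tauto))
      simp only [step]
      simp only [Finset.sum_ite, Finset.sum_const, smul_eq_mul]
      have c1 : (Finset.univ.filter (fun b : Fin 2 → Fin 2 => Even (gg b))).card = 3 := by
        decide
      have c2 : (Finset.univ.filter (fun b : Fin 2 → Fin 2 => ¬ Even (gg b))).card = 1 := by
        decide
      rw [c1, c2]; ring
    rw [key]
    have h4 : 4 ^ (l+1) = 4 * 4 ^ l := by ring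
    have h2 : 2 ^ (l+1) = 2 * 2 ^ l := by ring
    linarith

theorem stmt_0 (n l : ℕ) (hn : 1 ≤ n) (hl : 2 * l ≤ n) :
    (Finset.univ.filter (fun κ : Fin n → Fin 2 =>
      Even (∑ i : Fin l,
        (κ ⟨2 * i.val, by have := i.isLt; omega⟩).val *
        (κ ⟨2 * i.val + 1, by have := i.isLt; omega⟩).val))).card
    = 2 ^ (n - 1) + 2 ^ (n - l - 1) := by
  classical
  rw [← Fintype.card_subtype]
  have hn2 : 2*l + (n - 2*l) = n := by omega
  let e0 : Fin n ≃ Fin (2*l) ⊕ Fin (n - 2*l) := (finCongr hn2.symm).trans finSumFinEquiv.symm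
  let e3 : Fin (2*l) ≃ Fin l × Fin 2 := (finCongr (mul_comm 2 l)).trans finProdFinEquiv.symm
  let E : (Fin n → Fin 2) ≃ (Fin l → Fin 2 → Fin 2) × (Fin (n-2*l) → Fin 2) :=
    (Equiv.arrowCongr e0 (Equiv.refl _)).trans <|
    (Equiv.sumArrowEquivProdArrow _ _ _).trans <|
    Equiv.prodCongr ((Equiv.arrowCongr e3 (Equiv.refl _)).trans (Equiv.curry _ _ _)) (Equiv.refl _)
  have hval : ∀ (κ : Fin n → Fin 2) (i : Fin l) (j : Fin 2),
      (E κ).1 i j = κ ⟨j.val + 2*i.val, by have := i.isLt; have := j.isLt; omega⟩ := by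
    intro κ i j
    show κ (e0.symm (Sum.inl (e3.symm (i,j)))) = _
    congr 1
  have hS : ∀ κ : Fin n → Fin 2,
      (∑ i : Fin l,
        (κ ⟨2 * i.val, by have := i.isLt; omega⟩).val *
        (κ ⟨2 * i.val + 1, by have := i.isLt; omega⟩).val)
      = ∑ i, gg ((E κ).1 i) := by
    intro κ
    refine Finset.sum_congr rfl (fun i _ => ?_)
    rw [gg, hval κ i 0, hval κ i 1]
    exact congrArg₂ (fun (a b : Fin 2) => a.val * b.val)
      (congrArg κ (Fin.ext (by simp)))
      (congrArg κ (Fin.ext (by simp [Nat.add_comm])))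
  have step1 : Fintype.card {κ : Fin n → Fin 2 //
      Even (∑ i : Fin l,
        (κ ⟨2 * i.val, by have := i.isLt; omega⟩).val *
        (κ ⟨2 * i.val + 1, by have := i.isLt; omega⟩).val)}
      = Fintype.card {p : (Fin l → Fin 2 → Fin 2) × (Fin (n-2*l) → Fin 2) //
          Even (∑ i, gg (p.1 i))} := by
    refine Fintype.card_congr (E.subtypeEquiv (fun κ => ?_))
    rw [hS κ]
  clear hval hS
  clear E e3 e0
  rw [step1,
    Fintype.card_congr (Equiv.prodSubtypeFstEquivSubtypeProd
      (p := fun f : Fin l → Fin 2 → Fin 2 => Even (∑ i, gg (f i)))),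
    Fintype.card_prod]
  have hcard2 : Fintype.card (Fin (n - 2*l) → Fin 2) = 2 ^ (n - 2*l) := by
    simp [Fintype.card_fun]
  rw [hcard2]
  obtain ⟨C, hC⟩ : ∃ C, Fintype.card {f : Fin l → (Fin 2 → Fin 2) // Even (∑ i, gg (f i))} = C := ⟨_, rfl⟩
  have hA := cardA l
  rw [hC] at hA ⊢
  clear step1 hcard2 hC
  have key : 2 * (C * 2 ^ (n - 2*l)) = 2 ^ n + 2 ^ (n - l) := by
    rw [← mul_assoc, hA, add_mul]
    have h4 : (4:ℕ) ^ l = 2 ^ (2 * l) := by norm_num [pow_mul]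
    rw [h4, ← pow_add, ← pow_add, hn2]
    congr 2
    omega
  have hgoal2 : 2 * (2 ^ (n - 1) + 2 ^ (n - l - 1)) = 2 ^ n + 2 ^ (n - l) := by
    have h1 : (2:ℕ) ^ n = 2 * 2 ^ (n - 1) := by
      rw [← pow_succ']
      congr 1
      omega
    have h2 : (2:ℕ) ^ (n - l) = 2 * 2 ^ (n - l - 1) := by
      rw [← pow_succ']
      congr 1
      omega
    rw [h1, h2]; ring
  exact Nat.eq_of_mul_eq_mul_left (by norm_num) (key.trans hgoal2.symm)
end

section
/- Let S be a semilattice in a free abelian group Λ of finite rank, and define Σ(S) = {γ ∈ S : γ + σ ∈ S for all σ ∈ S}, the set of saturated elements. Then Σ(S) is a subgroup of Λ containing 2Λ. -/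
/-- The set of saturated elements of a subset `S` of an additive group. -/
def saturated {Λ : Type*} [AddCommGroup Λ] (S : Set Λ) : Set Λ :=
  {γ ∈ S | ∀ σ ∈ S, γ + σ ∈ S}

theorem stmt_6 (Λ : Type*) [AddCommGroup Λ] [Module.Free ℤ Λ] [Module.Finite ℤ Λ]
    (S : Set Λ) (h0 : (0 : Λ) ∈ S)
    (hsub : ∀ σ ∈ S, ∀ σ' ∈ S, σ - 2 • σ' ∈ S)
    (hgen : AddSubgroup.closure S = ⊤) :
    ∃ H : AddSubgroup Λ, (H : Set Λ) = saturated S ∧ ∀ lam : Λ, 2 • lam ∈ H := by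
  have hneg : ∀ σ ∈ S, -σ ∈ S := by
    intro σ hσ
    have := hsub σ hσ σ hσ
    simpa [two_smul, sub_add_eq_sub_sub] using this
  -- S + 2S ⊆ S
  have hadd2 : ∀ σ ∈ S, ∀ τ ∈ S, σ + 2 • τ ∈ S := by
    intro σ hσ τ hτ
    have := hsub σ hσ (-τ) (hneg τ hτ)
    simpa using this
  have key : ∀ lam : Λ, ∀ σ ∈ S, 2 • lam + σ ∈ S := by
    intro lam
    have hmem : lam ∈ AddSubgroup.closure S := by rw [hgen]; trivial
    induction hmem using AddSubgroup.closure_induction with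
    | mem x hx =>
      intro σ hσ
      have := hadd2 σ hσ x hx
      simpa [add_comm] using this
    | zero => simp only [smul_zero, zero_add]; exact fun σ hσ => hσ
    | add x y hx hy px py =>
      intro σ hσ
      have := px (2 • y + σ) (py σ hσ)
      simpa [smul_add, add_assoc] using this
    | neg x hx px =>
      intro σ hσ
      have h1 : 2 • x + σ ∈ S := px σ hσ
      have h2 : -(2 • x + σ) ∈ S := hneg _ h1
      have h3 : -(2 • x + σ) + 2 • σ ∈ S := hadd2 _ h2 σ hσ
      have : -(2 • x + σ) + 2 • σ = 2 • (-x) + σ := by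
        simp [two_smul]; abel
      rwa [this] at h3
  refine ⟨{ carrier := saturated S
            zero_mem' := ⟨h0, fun σ hσ => by simpa using hσ⟩
            add_mem' := ?_
            neg_mem' := ?_ }, rfl, ?_⟩
  · rintro a b ⟨haS, ha⟩ ⟨hbS, hb⟩
    refine ⟨ha b hbS, fun σ hσ => ?_⟩
    have := ha (b + σ) (hb σ hσ)
    simpa [add_assoc] using this
  · rintro a ⟨haS, ha⟩
    refine ⟨hneg a haS, fun σ hσ => ?_⟩
    have h1 : (a + σ) - 2 • a ∈ S := hsub _ (ha σ hσ) a haS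
    have : (a + σ) - 2 • a = -a + σ := by simp [two_smul]; abel
    rwa [this] at h1
  · intro lam
    refine ⟨by simpa using key lam 0 h0, fun σ hσ => key lam σ hσ⟩
end

section
/- Let S be a semilattice in a free abelian group Λ of finite rank and let σ ∈ S. Then Σ(S + σ) = Σ(S), i.e., the set of saturated elements is invariant under translation by elements of S. -/
section Saturated

variable {Λ : Type*} [AddCommGroup Λ] {S : Set Λ}

theorem mem_saturated_iff_of_zero_mem (h0 : (0 : Λ) ∈ S) {γ : Λ} :
    γ ∈ saturated S ↔ ∀ s ∈ S, γ + s ∈ S :=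
  ⟨And.right, fun h => ⟨by simpa using h 0 h0, h⟩⟩

theorem forall_add_mem_image_add_right_iff (σ γ : Λ) :
    (∀ t ∈ (fun x => x + σ) '' S, γ + t ∈ (fun x => x + σ) '' S) ↔ ∀ s ∈ S, γ + s ∈ S := by
  rw [Set.forall_mem_image]
  refine forall₂_congr fun s _ => ?_
  rw [← add_assoc, (add_left_injective σ).mem_set_image]

theorem saturated_image_add_right (h0 : (0 : Λ) ∈ S) {σ : Λ} (hneg : -σ ∈ S) :
    saturated ((fun x => x + σ) '' S) = saturated S := by
  have h0' : (0 : Λ) ∈ (fun x => x + σ) '' S := ⟨-σ, hneg, neg_add_cancel σ⟩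
  ext γ
  rw [mem_saturated_iff_of_zero_mem h0', mem_saturated_iff_of_zero_mem h0,
    forall_add_mem_image_add_right_iff]

end Saturated

theorem stmt_7_general (Λ : Type*) [AddCommGroup Λ]
    (S : Set Λ) (h0 : (0 : Λ) ∈ S)
    (hsub : ∀ σ ∈ S, ∀ σ' ∈ S, σ - 2 • σ' ∈ S)
    (σ : Λ) (hσ : σ ∈ S) :
    saturated ((fun x => x + σ) '' S) = saturated S := by
  have hneg : -σ ∈ S := by
    simpa [two_smul] using hsub σ hσ σ hσ
  exact saturated_image_add_right h0 hneg

theorem stmt_7 (Λ : Type*) [AddCommGroup Λ] [Module.Free ℤ Λ] [Module.Finite ℤ Λ]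
    (S : Set Λ) (h0 : (0 : Λ) ∈ S)
    (hsub : ∀ σ ∈ S, ∀ σ' ∈ S, σ - 2 • σ' ∈ S)
    (hgen : AddSubgroup.closure S = ⊤)
    (σ : Λ) (hσ : σ ∈ S) :
    saturated ((fun x => x + σ) '' S) = saturated S :=
  stmt_7_general Λ S h0 hsub σ hσ
end

section
/- Let n ≥ 1, l ≥ 1 with 2l < n, and let S = {α ∈ ℤ^n : α_{2l+1} + ∑_{i=1}^{l} α_{2i-1}·α_{2i} ≡ 0 (mod 2)}. Then the set Σ(S) of saturated elements of S equals Λ^{(2l+1)} = {α ∈ ℤ^n : α_i is even for all i ≤ 2l+1}. -/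
open Finset

theorem mem_saturated_setOf_even_iff {Λ : Type*} [AddCommGroup Λ] {Q : Λ → ℤ}
    {B : Λ → Λ → ℤ} (hQ : ∀ x y, Q (x + y) = Q x + Q y + B x y) {γ : Λ} :
    γ ∈ saturated {x | Even (Q x)} ↔ Even (Q γ) ∧ ∀ σ, Even (Q σ) → Even (B γ σ) := by
  simp only [saturated, Set.mem_ofPred_eq, hQ]
  refine and_congr_right fun hγ => forall₂_congr fun σ hσ => ?_
  simp [Int.even_add, hγ, hσ]

-- Coordinates are numbered from `0`: `f (2 * l)` is the paper's `α_{2l+1}`.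
def quadForm (l : ℕ) (f : ℕ → ℤ) : ℤ :=
  f (2 * l) + ∑ i ∈ range l, f (2 * i) * f (2 * i + 1)

def polarForm (l : ℕ) (f g : ℕ → ℤ) : ℤ :=
  ∑ i ∈ range l, (f (2 * i) * g (2 * i + 1) + g (2 * i) * f (2 * i + 1))

section QuadForm

variable {l : ℕ}

theorem quadForm_add (f g : ℕ → ℤ) :
    quadForm l (f + g) = quadForm l f + quadForm l g + polarForm l f g := by
  simp only [quadForm, polarForm, Pi.add_apply, add_mul, mul_add, sum_add_distrib]
  ring

theorem quadForm_single {k : ℕ} (hk : k ≠ 2 * l) : quadForm l (Pi.single k 1) = 0 := by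
  rw [quadForm, Pi.single_eq_of_ne hk.symm, zero_add]
  refine sum_eq_zero fun i _ => ?_
  simp only [Pi.single_apply]
  split_ifs <;> omega

theorem polarForm_single_two_mul_add_one {f : ℕ → ℤ} {j : ℕ} (hj : j < l) :
    polarForm l f (Pi.single (2 * j + 1) 1) = f (2 * j) := by
  rw [polarForm, sum_eq_single_of_mem j (mem_range.2 hj)]
  · simp
  · intro i _ hij
    simp only [Pi.single_apply]
    split_ifs <;> omega

theorem polarForm_single_two_mul {f : ℕ → ℤ} {j : ℕ} (hj : j < l) :
    polarForm l f (Pi.single (2 * j) 1) = f (2 * j + 1) := by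
  rw [polarForm, sum_eq_single_of_mem j (mem_range.2 hj)]
  · simp
  · intro i _ hij
    simp only [Pi.single_apply]
    split_ifs <;> omega

theorem even_quadForm_iff {f : ℕ → ℤ} (hf : ∀ k < 2 * l, Even (f k)) :
    Even (quadForm l f) ↔ Even (f (2 * l)) := by
  have : Even (∑ i ∈ range l, f (2 * i) * f (2 * i + 1)) :=
    even_sum _ fun i hi => (hf _ (by simp at hi; omega)).mul_right _
  simp [quadForm, Int.even_add, this]

theorem even_polarForm {f : ℕ → ℤ} (hf : ∀ k < 2 * l, Even (f k)) (g : ℕ → ℤ) :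
    Even (polarForm l f g) :=
  even_sum _ fun i hi => by
    simp only [mem_range] at hi
    exact ((hf _ (by omega)).mul_right _).add ((hf _ (by omega)).mul_left _)

theorem even_of_forall_even_polarForm_single {f : ℕ → ℤ}
    (h : ∀ k < 2 * l, Even (polarForm l f (Pi.single k 1))) : ∀ k < 2 * l, Even (f k) := by
  intro k hk
  obtain ⟨j, rfl | rfl⟩ := Nat.even_or_odd' k
  · rw [← polarForm_single_two_mul_add_one (f := f) (show j < l by omega)]
    exact h _ (by omega)
  · rw [← polarForm_single_two_mul (f := f) (show j < l by omega)]
    exact h _ (by omega)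

end QuadForm

def zeroExtend {M : Type*} [Zero M] {n : ℕ} (α : Fin n → M) (k : ℕ) : M :=
  if h : k < n then α ⟨k, h⟩ else 0

section ZeroExtend

variable {M : Type*} {n : ℕ}

theorem zeroExtend_of_lt [Zero M] (α : Fin n → M) {k : ℕ} (hk : k < n) :
    zeroExtend α k = α ⟨k, hk⟩ :=
  dif_pos hk

theorem zeroExtend_add [AddZeroClass M] (α β : Fin n → M) :
    zeroExtend (α + β) = zeroExtend α + zeroExtend β := by
  ext k
  by_cases hk : k < n <;> simp [zeroExtend, hk]

theorem forall_lt_zeroExtend_iff [Zero M] (α : Fin n → M) {p : M → Prop} {m : ℕ} (hm : m ≤ n) :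
    (∀ k < m, p (zeroExtend α k)) ↔ ∀ i : Fin n, i.val < m → p (α i) :=
  ⟨fun h i hi => zeroExtend_of_lt α i.isLt ▸ h i hi,
    fun h k hk => zeroExtend_of_lt α (show k < n by omega) ▸ h ⟨k, by omega⟩ hk⟩

theorem zeroExtend_single [Zero M] [One M] {k : ℕ} (hk : k < n) :
    zeroExtend (Pi.single (⟨k, hk⟩ : Fin n) (1 : M)) = Pi.single k 1 := by
  ext j
  by_cases hj : j < n <;> simp [zeroExtend, hj, Pi.single_apply, Fin.ext_iff]
  omega

end ZeroExtend

theorem saturated_setOf_even_quadForm {n l : ℕ} (h2l : 2 * l < n) :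
    saturated {α : Fin n → ℤ | Even (quadForm l (zeroExtend α))} =
      {α | ∀ k < 2 * l + 1, Even (zeroExtend α k)} := by
  have hQ (α β : Fin n → ℤ) : quadForm l (zeroExtend (α + β)) =
      quadForm l (zeroExtend α) + quadForm l (zeroExtend β) +
        polarForm l (zeroExtend α) (zeroExtend β) := by
    rw [zeroExtend_add, quadForm_add]
  ext α
  rw [mem_saturated_setOf_even_iff hQ, Set.mem_ofPred_eq]
  constructor
  · rintro ⟨hq, hpolar⟩
    have hlow : ∀ k < 2 * l, Even (zeroExtend α k) :=
      even_of_forall_even_polarForm_single fun k hk => by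
        have hkn : k < n := by omega
        have := hpolar (Pi.single ⟨k, hkn⟩ 1)
        rw [zeroExtend_single hkn, quadForm_single hk.ne] at this
        exact this Even.zero
    intro k hk
    rcases Nat.lt_succ_iff_lt_or_eq.1 hk with hk | rfl
    · exact hlow k hk
    · exact (even_quadForm_iff hlow).1 hq
  · intro h
    have hlow : ∀ k < 2 * l, Even (zeroExtend α k) := fun k hk => h k (by omega)
    exact ⟨(even_quadForm_iff hlow).2 (h _ (by omega)), fun σ _ => even_polarForm hlow _⟩

theorem stmt_13 (n l : ℕ) (h2l : 2 * l < n) :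
    saturated {α : Fin n → ℤ |
        Even (α ⟨2 * l, h2l⟩ + ∑ i : Fin l,
          α ⟨2 * i.val, by have := i.isLt; omega⟩ *
          α ⟨2 * i.val + 1, by have := i.isLt; omega⟩)}
      = {α : Fin n → ℤ | ∀ i : Fin n, i.val < 2 * l + 1 → (2 : ℤ) ∣ α i} := by
  have hS : {α : Fin n → ℤ | Even (α ⟨2 * l, h2l⟩ + ∑ i : Fin l,
          α ⟨2 * i.val, by have := i.isLt; omega⟩ *
          α ⟨2 * i.val + 1, by have := i.isLt; omega⟩)} =
      {α | Even (quadForm l (zeroExtend α))} := by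
    ext α
    simp only [Set.mem_ofPred_eq, quadForm, zeroExtend_of_lt α h2l,
      ← Fin.sum_univ_eq_sum_range (fun i => zeroExtend α (2 * i) * zeroExtend α (2 * i + 1))]
    refine Iff.of_eq (congrArg _ (congrArg _ (sum_congr rfl fun i _ => ?_)))
    rw [zeroExtend_of_lt α (by omega), zeroExtend_of_lt α (by omega)]
  rw [hS, saturated_setOf_even_quadForm h2l]
  ext α
  simp only [Set.mem_ofPred_eq, ← even_iff_two_dvd]
  exact forall_lt_zeroExtend_iff α h2l
end
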